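/- arXiv:1604.05927 — 5 statements merged into one kernel-verified Lean document; each statement's English description precedes it below -/
import Mathlib

section
/- Suppose the data set X^n in ℝ^p (with n > p ≥ 1) is in general position and the affine span of the Tukey median region M has dimension equal to p (equivalently, M has nonempty interior). Then the maximum Tukey depth satisfies λ* ≤ ⌊(n − p + 1)/2⌋ / n. -/
/-!
Let `k = nλ*`, the integer depth of every median point. Because the median region spans `ℝ^p`,
through any `p - 1` data points there is a hyperplane with median points strictly on both
sides: the affine functionals vanishing at those points form a space of dimension at least two,
and none of them except zero vanishes on the whole median region. Each open side of that
hyperplane then contains at least `k` data points (it contains a closed halfspace through a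
median point), and the hyperplane itself at least `p - 1`, so `2k + p - 1 ≤ n`.
-/

open scoped RealInnerProductSpace

/-- Number of data points in the closed halfspace `{y : ⟪u, y⟫ ≤ ⟪u, x⟫}`. -/
noncomputable def depthCount {p n : ℕ} (X : Fin n → EuclideanSpace ℝ (Fin p))
    (u x : EuclideanSpace ℝ (Fin p)) : ℕ :=
  Nat.card {i : Fin n // ⟪u, X i⟫ ≤ ⟪u, x⟫}

/-- Tukey (halfspace) depth of `x` with respect to the data set `X`:
`(1/n) · inf` over nonzero `u` of the number of data points `i` with `⟪u, X i⟫ ≤ ⟪u, x⟫`. -/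
noncomputable def tukeyDepth {p n : ℕ} (X : Fin n → EuclideanSpace ℝ (Fin p))
    (x : EuclideanSpace ℝ (Fin p)) : ℝ :=
  (sInf {k : ℕ | ∃ u : EuclideanSpace ℝ (Fin p), u ≠ 0 ∧ k = depthCount X u x} : ℕ) / n

/-- Maximum Tukey depth `λ* = sup_x D(x)`. -/
noncomputable def maxDepth {p n : ℕ} (X : Fin n → EuclideanSpace ℝ (Fin p)) : ℝ :=
  ⨆ x, tukeyDepth X x

/-- Tukey median region `M = {x : D(x) = λ*}`. -/
def medianRegion {p n : ℕ} (X : Fin n → EuclideanSpace ℝ (Fin p)) :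
    Set (EuclideanSpace ℝ (Fin p)) :=
  {x | tukeyDepth X x = maxDepth X}

/-- The data set is in general position: every affine hyperplane
(set of the form `{y : ⟪u, y⟫ = c}` with `u ≠ 0`) contains at most `p` of the points. -/
def InGeneralPosition {p n : ℕ} (X : Fin n → EuclideanSpace ℝ (Fin p)) : Prop :=
  ∀ u : EuclideanSpace ℝ (Fin p), u ≠ 0 → ∀ c : ℝ,
    Nat.card {i : Fin n // ⟪u, X i⟫ = c} ≤ p

open Module

theorem exists_apply_neg_apply_pos_of_two_le_finrank {W ι : Type*} [AddCommGroup W]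
    [Module ℝ W] (hW : 2 ≤ finrank ℝ W) (f : ι → Dual ℝ W)
    (hf : ∀ w ≠ 0, ∃ i, f i w ≠ 0) : ∃ w i j, f i w < 0 ∧ 0 < f j w := by
  have : Module.Finite ℝ W := Module.finite_of_finrank_pos (by omega)
  have : Nontrivial W := nontrivial_of_finrank_pos (R := ℝ) (by omega)
  obtain ⟨w', hw'⟩ := exists_ne (0 : W)
  obtain ⟨i, hi⟩ := hf w' hw'
  -- Start at a point where `f i = -1` and move along `ker (f i)` until `f j` turns positive.
  have hker : LinearMap.ker (f i) ≠ ⊥ := fun h => by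
    have := LinearMap.finrank_le_finrank_of_injective (LinearMap.ker_eq_bot.1 h)
    rw [finrank_self] at this
    omega
  obtain ⟨w₀, hw₀i, hw₀⟩ := Submodule.exists_mem_ne_zero_of_ne_bot hker
  obtain ⟨j, hj⟩ := hf w₀ hw₀
  set w₁ := -(f i w')⁻¹ • w'
  have hw₁ : f i w₁ = -1 := by simp [w₁, hi]
  refine ⟨w₁ + ((1 - f j w₁) / f j w₀) • w₀, i, j, ?_, ?_⟩
  · simp [hw₁, LinearMap.mem_ker.1 hw₀i]
  · simp [field]

theorem card_lt_add_card_eq_add_card_gt {ι α : Type*} [Fintype ι] [LinearOrder α]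
    (f : ι → α) (c : α) :
    Nat.card {i // f i < c} + Nat.card {i // f i = c} + Nat.card {i // c < f i} =
      Fintype.card ι := by
  classical
  simp only [Nat.card_eq_fintype_card, Fintype.card_subtype, Finset.card_filter]
  rw [← Finset.sum_add_distrib, ← Finset.sum_add_distrib, Finset.card_univ.symm,
    Finset.card_eq_sum_ones]
  refine Finset.sum_congr rfl fun i _ => ?_
  rcases lt_trichotomy (f i) c with h | h | h
  · simp [h, h.ne, h.not_gt]
  · simp [h]
  · simp [h, h.ne', h.not_gt]

section InnerProductSpace

variable {E : Type*} [NormedAddCommGroup E] [InnerProductSpace ℝ E]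

theorem exists_inner_ne_of_vectorSpan_eq_top {M : Set E} (hM : vectorSpan ℝ M = ⊤) {u : E}
    (hu : u ≠ 0) (c : ℝ) : ∃ y ∈ M, ⟪u, y⟫ ≠ c := by
  by_contra! h
  have : vectorSpan ℝ M ≤ LinearMap.ker (innerₛₗ ℝ u) := by
    rw [vectorSpan_def, Submodule.span_le]
    rintro _ ⟨y, hy, z, hz, rfl⟩
    simp [inner_sub_right, h y hy, h z hz]
  rw [hM, top_le_iff, LinearMap.ker_eq_top] at this
  exact hu (inner_self_eq_zero.1 (LinearMap.congr_fun this u))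

/-- A pair `(u, c)` stands for the affine function `x ↦ ⟪u, x⟫ - c`; this evaluates it at `y`. -/
noncomputable def affineEval (y : E) : E × ℝ →ₗ[ℝ] ℝ :=
  (innerₛₗ ℝ y).comp (LinearMap.fst ℝ E ℝ) - LinearMap.snd ℝ E ℝ

@[simp]
theorem affineEval_apply (y : E) (w : E × ℝ) : affineEval y w = ⟪w.1, y⟫ - w.2 := by
  simp [affineEval, real_inner_comm]

theorem exists_hyperplane_through_separating [FiniteDimensional ℝ E] {ι : Type*} [Fintype ι]
    (Y : ι → E) (hY : Fintype.card ι < finrank ℝ E) {M : Set E} (hM : vectorSpan ℝ M = ⊤) :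
    ∃ u c, u ≠ 0 ∧ (∀ i, ⟪u, Y i⟫ = c) ∧ (∃ y ∈ M, ⟪u, y⟫ < c) ∧ ∃ z ∈ M, c < ⟪u, z⟫ := by
  set L : E × ℝ →ₗ[ℝ] ι → ℝ := LinearMap.pi fun i => affineEval (Y i)
  have hW : 2 ≤ finrank ℝ (LinearMap.ker L) := by
    have := L.finrank_range_add_finrank_ker
    have := Submodule.finrank_le (LinearMap.range L)
    simp only [finrank_prod, finrank_self, finrank_fintype_fun_eq_card] at *
    omega
  have : Nontrivial E := nontrivial_of_finrank_pos (R := ℝ) (by omega)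
  obtain ⟨e, he⟩ := exists_ne (0 : E)
  obtain ⟨y₀, hy₀, -⟩ := exists_inner_ne_of_vectorSpan_eq_top hM he 0
  have hsep : ∀ w : E × ℝ, w ≠ 0 → ∃ y ∈ M, affineEval y w ≠ 0 := by
    rintro ⟨u, c⟩ hw
    by_cases hu : u = 0
    · subst hu
      exact ⟨y₀, hy₀, by simpa using hw⟩
    · obtain ⟨y, hy, hyc⟩ := exists_inner_ne_of_vectorSpan_eq_top hM hu c
      exact ⟨y, hy, by simpa [sub_eq_zero] using hyc⟩
  obtain ⟨⟨⟨u, c⟩, hL⟩, ⟨y, hy⟩, ⟨z, hz⟩, hyc, hzc⟩ :=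
    exists_apply_neg_apply_pos_of_two_le_finrank hW
      (fun y : M => (affineEval (y : E)).comp (LinearMap.ker L).subtype)
      fun w hw => by simpa using hsep w (by simpa using hw)
  have hL' : ∀ i, ⟪u, Y i⟫ = c := fun i => by
    simpa [L, sub_eq_zero] using congr_fun (LinearMap.mem_ker.1 hL) i
  simp only [LinearMap.comp_apply, Submodule.subtype_apply, affineEval_apply,
    sub_neg, sub_pos] at hyc hzc
  refine ⟨u, c, fun hu => ?_, hL', ⟨y, hy, hyc⟩, z, hz, hzc⟩
  simp only [hu, inner_zero_left] at hyc hzc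
  linarith

end InnerProductSpace

section Depth

variable {p n : ℕ} {X : Fin n → EuclideanSpace ℝ (Fin p)} {u x : EuclideanSpace ℝ (Fin p)}

theorem le_depthCount_of_div_le_tukeyDepth (hn : 0 < n) {k : ℕ}
    (hk : (k : ℝ) / n ≤ tukeyDepth X x) (hu : u ≠ 0) : k ≤ depthCount X u x := by
  rw [tukeyDepth, div_le_div_iff_of_pos_right (by exact_mod_cast hn), Nat.cast_le] at hk
  exact hk.trans (Nat.sInf_le ⟨u, hu, rfl⟩)

theorem depthCount_le_card_lt {c : ℝ} (hc : ⟪u, x⟫ < c) :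
    depthCount X u x ≤ Nat.card {i // ⟪u, X i⟫ < c} :=
  Nat.card_le_card_of_injective _ (Subtype.impEmbedding _ _ fun _ hi => hi.trans_lt hc).injective

theorem depthCount_neg_le_card_gt {c : ℝ} (hc : c < ⟪u, x⟫) :
    depthCount X (-u) x ≤ Nat.card {i // c < ⟪u, X i⟫} :=
  Nat.card_le_card_of_injective _ (Subtype.impEmbedding _ _ fun _ hi =>
    hc.trans_le (by simpa [inner_neg_left] using hi)).injective

end Depth

theorem maxDepth_le_of_fullDim_general {p n : ℕ} (hp : 1 ≤ p) (hn : p < n)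
    (X : Fin n → EuclideanSpace ℝ (Fin p))
    (hdim : Module.finrank ℝ (affineSpan ℝ (medianRegion X)).direction = p) :
    maxDepth X ≤ ((n - p + 1) / 2 : ℕ) / (n : ℝ) := by
  have hspan : vectorSpan ℝ (medianRegion X) = ⊤ := by
    rw [← direction_affineSpan]
    exact Submodule.eq_top_of_finrank_eq (by simpa using hdim)
  have hpn : p - 1 ≤ n := by omega
  obtain ⟨u, c, hu, hthrough, ⟨y, hy, hyc⟩, z, hz, hzc⟩ :=
    exists_hyperplane_through_separating (fun j : Fin (p - 1) => X (Fin.castLE hpn j))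
      (by simp; omega) hspan
  have hon : p - 1 ≤ Nat.card {i // ⟪u, X i⟫ = c} := by
    simpa using Nat.card_le_card_of_injective
      (fun j : Fin (p - 1) => (⟨Fin.castLE hpn j, hthrough j⟩ : {i // ⟪u, X i⟫ = c}))
      fun a b h => Fin.castLE_injective hpn (congrArg Subtype.val h)
  obtain ⟨k, hk⟩ : ∃ k : ℕ, maxDepth X = k / n := ⟨_, hy.symm⟩
  have hdepth : ∀ x ∈ medianRegion X, tukeyDepth X x = k / n := fun x hx => hx.trans hk
  have hbelow : k ≤ Nat.card {i // ⟪u, X i⟫ < c} :=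
    (le_depthCount_of_div_le_tukeyDepth (by omega) (hdepth y hy).ge hu).trans
      (depthCount_le_card_lt hyc)
  have habove : k ≤ Nat.card {i // c < ⟪u, X i⟫} :=
    (le_depthCount_of_div_le_tukeyDepth (by omega) (hdepth z hz).ge (neg_ne_zero.2 hu)).trans
      (depthCount_neg_le_card_gt hzc)
  have htotal := card_lt_add_card_eq_add_card_gt (fun i => ⟪u, X i⟫) c
  rw [Fintype.card_fin] at htotal
  rw [hk]
  gcongr
  omega

/-- If `Xⁿ` is in general position and the median region has affine dimension `p`,
then `λ* ≤ ⌊(n - p + 1)/2⌋ / n`. -/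
theorem maxDepth_le_of_fullDim {p n : ℕ} (hp : 1 ≤ p) (hn : p < n)
    (X : Fin n → EuclideanSpace ℝ (Fin p))
    (hgp : InGeneralPosition X)
    (hdim : Module.finrank ℝ (affineSpan ℝ (medianRegion X)).direction = p) :
    maxDepth X ≤ ((n - p + 1) / 2 : ℕ) / (n : ℝ) :=
  maxDepth_le_of_fullDim_general hp hn X hdim
end

section
/- Suppose the data set X^n in ℝ^p (with n > p ≥ 1) is in general position and the affine span of the Tukey median region M has dimension strictly less than p (equivalently, M has empty interior). Then the maximum Tukey depth satisfies λ* ≤ ⌊(n − p + 2)/2⌋ / n. -/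
open scoped RealInnerProductSpace

/-!
Fix `x` and put `dᵢ = Xᵢ - x`. If the `dᵢ` did not span `ℝᵖ`, all `n > p` data points would lie on
one hyperplane through `x`; so some `p` of them form a basis, and the hyperplane `H` through `x`
spanned by `p - 1` of these contains, by general position, at most `p` data points. One of the
two closed sides of `H` therefore holds at most `(n + p) / 2` points. Tilting `H` slightly about
`x`, so that the `p - 1` chosen points move to the open far side, yields a closed halfspace at `x`
with at most `(n + p) / 2 - (p - 1)` points, i.e. at most `⌊(n - p + 2) / 2⌋`.
-/

open Finset Filter Topology

theorem card_filter_le_add_card_filter_ge {α β : Type*} [Fintype α] [LinearOrder β]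
    (f : α → β) (c : β) :
    #{i | f i ≤ c} + #{i | c ≤ f i} = Fintype.card α + #{i | f i = c} := by
  classical
  rw [← card_union_add_card_inter, ← filter_or, ← filter_and, ← card_univ,
    filter_true_of_mem fun i _ => le_total _ _]
  simp only [← le_antisymm_iff]

theorem eventually_card_filter_add_mul_nonpos_add_card_le {α : Type*} [Fintype α]
    (f g : α → ℝ) (s : Finset α) (hf : ∀ i ∈ s, f i = 0) (hg : ∀ i ∈ s, 0 < g i) :
    ∀ᶠ ε in 𝓝[>] (0 : ℝ), #{i | f i + ε * g i ≤ 0} + #s ≤ #{i | f i ≤ 0} := by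
  classical
  have hpoint : ∀ i, ∀ᶠ ε in 𝓝[>] (0 : ℝ), f i + ε * g i ≤ 0 → f i ≤ 0 ∧ i ∉ s := by
    intro i
    rcases lt_or_ge 0 (f i) with hpos | hnonpos
    · have hcont : Continuous fun ε : ℝ => f i + ε * g i := by fun_prop
      have hlim : Tendsto (fun ε : ℝ => f i + ε * g i) (𝓝[>] 0) (𝓝 (f i)) := by
        simpa using (hcont.tendsto 0).mono_left nhdsWithin_le_nhds
      filter_upwards [hlim.eventually (lt_mem_nhds hpos)] with ε hε h
      exact absurd h (not_le.2 hε)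
    · filter_upwards [self_mem_nhdsWithin] with ε (hε : 0 < ε) h
      refine ⟨hnonpos, fun hi => ?_⟩
      rw [hf i hi] at h
      linarith [mul_pos hε (hg i hi)]
  filter_upwards [eventually_all.2 hpoint] with ε hε
  have hs : s ⊆ univ.filter (f · ≤ 0) := fun i hi => mem_filter.2 ⟨mem_univ i, (hf i hi).le⟩
  calc #{i | f i + ε * g i ≤ 0} + #s ≤ #(univ.filter (f · ≤ 0) \ s) + #s := by
        gcongr
        intro i hi
        obtain ⟨hle, hns⟩ := hε i (mem_filter.1 hi).2
        exact mem_sdiff.2 ⟨mem_filter.2 ⟨mem_univ i, hle⟩, hns⟩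
    _ = #{i | f i ≤ 0} := card_sdiff_add_card_eq_card hs

section InnerProductSpace

variable {E : Type*} [NormedAddCommGroup E] [InnerProductSpace ℝ E]

theorem exists_ne_zero_card_inner_nonpos_add_card_le {α : Type*} [Fintype α] {v : E}
    (hv : v ≠ 0) (w : E) (d : α → E) (s : Finset α) (hvs : ∀ i ∈ s, ⟪v, d i⟫ = 0)
    (hws : ∀ i ∈ s, 0 < ⟪w, d i⟫) :
    ∃ u ≠ 0, #{i | ⟪u, d i⟫ ≤ 0} + #s ≤ #{i | ⟪v, d i⟫ ≤ 0} := by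
  have hne : ∀ᶠ ε in 𝓝[>] (0 : ℝ), v + ε • w ≠ 0 := by
    have hcont : Continuous fun ε : ℝ => v + ε • w := by fun_prop
    have hlim : Tendsto (fun ε : ℝ => v + ε • w) (𝓝 0) (𝓝 v) := by
      simpa using hcont.tendsto 0
    exact nhdsWithin_le_nhds (hlim.eventually_ne hv)
  obtain ⟨ε, hε, hcard⟩ :=
    (hne.and (eventually_card_filter_add_mul_nonpos_add_card_le _ _ s hvs hws)).exists
  exact ⟨v + ε • w, hε, by simpa only [inner_add_left, real_inner_smul_left] using hcard⟩

theorem exists_inner_eq_zero_inner_eq_one_of_span_eq_top [FiniteDimensional ℝ E] {α : Type*}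
    (d : α → E) (hd : Submodule.span ℝ (Set.range d) = ⊤) (hE : 0 < Module.finrank ℝ E) :
    ∃ v w : E, ∃ s : Finset α, v ≠ 0 ∧ #s + 1 = Module.finrank ℝ E ∧
      ∀ i ∈ s, ⟪v, d i⟫ = 0 ∧ ⟪w, d i⟫ = 1 := by
  classical
  obtain ⟨κ, a, ha, hspan, hli⟩ := exists_linearIndependent' ℝ d
  let b := Module.Basis.mk hli (by rw [hspan, hd])
  have : Fintype κ := @Fintype.ofFinite κ hli.finite
  have hcard := Module.finrank_eq_card_basis b
  obtain ⟨k₀⟩ : Nonempty κ := Fintype.card_pos_iff.1 (hcard ▸ hE)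
  have hb : ∀ k, d (a k) = b k := fun k => (Module.Basis.mk_apply hli _ k).symm
  let v := (InnerProductSpace.toDual ℝ E).symm (b.coord k₀).toContinuousLinearMap
  let w := (InnerProductSpace.toDual ℝ E).symm b.sumCoords.toContinuousLinearMap
  have hv : ∀ k, ⟪v, b k⟫ = if k = k₀ then 1 else 0 := fun k => by
    simp [v, InnerProductSpace.toDual_symm_apply, Finsupp.single_apply, eq_comm]
  have hw : ∀ k, ⟪w, b k⟫ = 1 := fun k => by
    simp [w, InnerProductSpace.toDual_symm_apply]
  refine ⟨v, w, (univ.erase k₀).map ⟨a, ha⟩, fun h => ?_, ?_, ?_⟩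
  · simpa [h] using hv k₀
  · rw [Finset.card_map, card_erase_of_mem (mem_univ k₀), card_univ, hcard]
    have := Fintype.card_pos_iff.2 ⟨k₀⟩
    omega
  · simp only [Finset.mem_map, mem_erase, Function.Embedding.coeFn_mk]
    rintro _ ⟨k, ⟨hk, -⟩, rfl⟩
    simp [hb, hv, hw, hk]

end InnerProductSpace

section TukeyDepth

variable {p n : ℕ} {X : Fin n → EuclideanSpace ℝ (Fin p)}

theorem depthCount_eq_card (u x : EuclideanSpace ℝ (Fin p)) :
    depthCount X u x = #{i | ⟪u, X i - x⟫ ≤ 0} := by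
  rw [depthCount, Nat.card_eq_fintype_card, Fintype.card_subtype]
  simp only [inner_sub_right, sub_nonpos]

theorem tukeyDepth_le_of_depthCount_le {u x : EuclideanSpace ℝ (Fin p)} {k : ℕ} (hu : u ≠ 0)
    (h : depthCount X u x ≤ k) : tukeyDepth X x ≤ k / (n : ℝ) := by
  unfold tukeyDepth
  gcongr
  have hmem : depthCount X u x ∈
      {k : ℕ | ∃ u : EuclideanSpace ℝ (Fin p), u ≠ 0 ∧ k = depthCount X u x} := ⟨u, hu, rfl⟩
  exact (Nat.sInf_le hmem).trans h

theorem InGeneralPosition.card_filter_inner_sub_eq_zero_le (hgp : InGeneralPosition X)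
    {v : EuclideanSpace ℝ (Fin p)} (hv : v ≠ 0) (x : EuclideanSpace ℝ (Fin p)) :
    #{i | ⟪v, X i - x⟫ = 0} ≤ p := by
  have := hgp v hv ⟪v, x⟫
  rw [Nat.card_eq_fintype_card, Fintype.card_subtype] at this
  simpa only [inner_sub_right, sub_eq_zero] using this

theorem InGeneralPosition.span_range_sub_eq_top (hgp : InGeneralPosition X) (hn : p < n)
    (x : EuclideanSpace ℝ (Fin p)) : Submodule.span ℝ (Set.range fun i => X i - x) = ⊤ := by
  by_contra hne
  obtain ⟨v, hv, hv0⟩ := Submodule.ne_bot_iff _ |>.1 (mt Submodule.orthogonal_eq_bot_iff.1 hne)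
  have hall : ∀ i, ⟪v, X i - x⟫ = 0 := fun i =>
    Submodule.inner_left_of_mem_orthogonal (Submodule.subset_span (Set.mem_range_self i)) hv
  have := hgp.card_filter_inner_sub_eq_zero_le hv0 x
  simp only [hall, filter_true, card_univ, Fintype.card_fin] at this
  omega

theorem InGeneralPosition.exists_depthCount_le (hp : 1 ≤ p) (hn : p < n)
    (hgp : InGeneralPosition X) (x : EuclideanSpace ℝ (Fin p)) :
    ∃ u ≠ 0, depthCount X u x ≤ (n - p + 2) / 2 := by
  set d := fun i => X i - x
  obtain ⟨v, w, s, hv, hs, hsvw⟩ := exists_inner_eq_zero_inner_eq_one_of_span_eq_top d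
    (hgp.span_range_sub_eq_top hn x) (by rw [finrank_euclideanSpace_fin]; omega)
  rw [finrank_euclideanSpace_fin] at hs
  have hz : #{i | ⟪v, d i⟫ = 0} ≤ p := hgp.card_filter_inner_sub_eq_zero_le hv x
  have hsides := card_filter_le_add_card_filter_ge (fun i => ⟪v, d i⟫) 0
  simp only [Fintype.card_fin] at hsides
  obtain ⟨v', hv', hv's, hside⟩ : ∃ v', v' ≠ 0 ∧ (∀ i ∈ s, ⟪v', d i⟫ = 0) ∧
      2 * #{i | ⟪v', d i⟫ ≤ 0} ≤ n + p := by
    rcases le_total #{i | ⟪v, d i⟫ ≤ 0} #{i | 0 ≤ ⟪v, d i⟫} with h | h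
    · exact ⟨v, hv, fun i hi => (hsvw i hi).1, by omega⟩
    · refine ⟨-v, neg_ne_zero.2 hv, fun i hi => by simp [inner_neg_left, (hsvw i hi).1], ?_⟩
      simp only [inner_neg_left, neg_nonpos]
      omega
  obtain ⟨u, hu, hcount⟩ := exists_ne_zero_card_inner_nonpos_add_card_le hv' w d s hv's
    fun i hi => (hsvw i hi).2 ▸ one_pos
  have hdepth : depthCount X u x = #{i | ⟪u, d i⟫ ≤ 0} := depthCount_eq_card u x
  exact ⟨u, hu, by omega⟩

end TukeyDepth

theorem maxDepth_le_of_lowDim_general {p n : ℕ} (hp : 1 ≤ p) (hn : p < n)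
    (X : Fin n → EuclideanSpace ℝ (Fin p))
    (hgp : InGeneralPosition X) :
    maxDepth X ≤ ((n - p + 2) / 2 : ℕ) / (n : ℝ) := by
  refine ciSup_le fun x => ?_
  obtain ⟨u, hu, hcount⟩ := hgp.exists_depthCount_le hp hn x
  exact tukeyDepth_le_of_depthCount_le hu hcount

/-- If `Xⁿ` is in general position and the median region has affine dimension `< p`,
then `λ* ≤ ⌊(n - p + 2)/2⌋ / n`. -/
theorem maxDepth_le_of_lowDim {p n : ℕ} (hp : 1 ≤ p) (hn : p < n)
    (X : Fin n → EuclideanSpace ℝ (Fin p))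
    (hgp : InGeneralPosition X)
    (hdim : Module.finrank ℝ (affineSpan ℝ (medianRegion X)).direction < p) :
    maxDepth X ≤ ((n - p + 2) / 2 : ℕ) / (n : ℝ) :=
  maxDepth_le_of_lowDim_general hp hn X hgp
end

section
/- Suppose p ≥ 3, n > p, and the data set X^n in ℝ^p is in general position. Then X^n is not halfspace symmetric about any point: there is no θ ∈ ℝ^p such that for every nonzero u ∈ ℝ^p, #{i ∈ {1,…,n} : ⟨u, X_i⟩ ≤ ⟨u, θ⟩} ≥ n/2. In other words, 'in general position' and 'halfspace symmetry' cannot coexist for a data set in ℝ^p with p ≥ 3. -/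
open scoped RealInnerProductSpace

/-!
Move `θ` to the origin. General position and `n > p` force the vectors `X i - θ` to span, so
some `p` of them form a basis `b`; let `φ` be the coordinate of one basis vector `b k₀` and `ψ`
the sum of all coordinates. The hyperplane `φ = 0` contains the `p - 1` other basis vectors, on
which `ψ > 0`. For small `ε > 0` the open halfspaces `±φ + εψ > 0` contain, respectively, all points
with `±φ > 0` together with those `p - 1` points. Symmetry allows each open halfspace at most
`n / 2` points, and adding the two bounds gives `2 (p - 1) ≤ #{φ = 0} ≤ p`, i.e. `p ≤ 2`.
-/

open Finset Filter Topology Module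

lemma eventually_forall_pos_add_mul {ι : Type*} [Finite ι] (a b : ι → ℝ) :
    ∀ᶠ ε in 𝓝[>] (0 : ℝ), ∀ i, (0 < a i ∨ a i = 0 ∧ 0 < b i) → 0 < a i + ε * b i := by
  refine eventually_all.2 fun i => ?_
  by_cases ha : 0 < a i
  · have hlim : Tendsto (fun ε => a i + ε * b i) (𝓝[>] 0) (𝓝 (a i)) :=
      tendsto_nhdsWithin_of_tendsto_nhds <|
        (by fun_prop : Continuous fun ε : ℝ => a i + ε * b i).tendsto' 0 (a i) (by simp)
    exact (hlim.eventually (lt_mem_nhds ha)).mono fun _ h _ => h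
  · filter_upwards [self_mem_nhdsWithin] with ε (hε : 0 < ε)
    rintro (h | ⟨h0, hb⟩)
    · exact absurd h ha
    · rw [h0, zero_add]
      exact mul_pos hε hb

section Counting

variable {ι : Type*} [Fintype ι]

lemma card_add_card_le_card_of_disjoint {P Q R : ι → Prop} [DecidablePred P] [DecidablePred Q]
    [DecidablePred R] (hPQ : ∀ i, P i → ¬ Q i) (hR : ∀ i, P i ∨ Q i → R i) :
    #{i | P i} + #{i | Q i} ≤ #{i | R i} := by
  classical
  rw [← card_union_of_disjoint (disjoint_filter.2 fun i _ => hPQ i), ← filter_or]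
  exact card_le_card (monotone_filter_right _ fun i _ => hR i)

lemma card_le_card_pos_add_card_neg_add_card_zero (d : ι → ℝ) :
    Fintype.card ι ≤ #{i | 0 < d i} + #{i | d i < 0} + #{i | d i = 0} := by
  classical
  have hne : #{i | ¬ d i = 0} ≤ #{i | 0 < d i} + #{i | d i < 0} :=
    calc _ ≤ #(({i | 0 < d i} : Finset ι) ∪ ({i | d i < 0} : Finset ι)) :=
          card_le_card fun i => by simp [eq_comm]
      _ ≤ _ := card_union_le _ _
  have := card_filter_add_card_filter_not (s := univ) (fun i => d i = 0)
  rw [card_univ] at this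
  omega

theorem two_mul_card_le_card_zero_of_halving (d e : ι → ℝ)
    (hhalf : ∀ c ε : ℝ, 2 * #{i | 0 < c * d i + ε * e i} ≤ Fintype.card ι) :
    2 * #{i | d i = 0 ∧ 0 < e i} ≤ #{i | d i = 0} := by
  obtain ⟨ε, hplus, hminus⟩ :=
    ((eventually_forall_pos_add_mul d e).and (eventually_forall_pos_add_mul (-d) e)).exists
  have hpos : #{i | 0 < d i} + #{i | d i = 0 ∧ 0 < e i} ≤ #{i | 0 < 1 * d i + ε * e i} :=
    card_add_card_le_card_of_disjoint (fun i h h' => h.ne' h'.1) fun i hi => by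
      simpa using hplus i hi
  have hneg : #{i | d i < 0} + #{i | d i = 0 ∧ 0 < e i} ≤ #{i | 0 < -1 * d i + ε * e i} :=
    card_add_card_le_card_of_disjoint (fun i h h' => h.ne h'.1) fun i hi => by
      simpa using hminus i (by simpa using hi)
  have hsplit := card_le_card_pos_add_card_neg_add_card_zero d
  have hhalf_pos := hhalf 1 ε
  have hhalf_neg := hhalf (-1) ε
  omega

end Counting

theorem exists_dual_ne_zero_two_mul_finrank_sub_one_le_card {ι E : Type*} [Fintype ι]
    [AddCommGroup E] [Module ℝ E] [FiniteDimensional ℝ E] [Nontrivial E] (f : ι → E)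
    (hspan : Submodule.span ℝ (Set.range f) = ⊤)
    (hhalf : ∀ φ : Dual ℝ E, 2 * #{i | 0 < φ (f i)} ≤ Fintype.card ι) :
    ∃ φ : Dual ℝ E, φ ≠ 0 ∧ 2 * (finrank ℝ E - 1) ≤ #{i | φ (f i) = 0} := by
  classical
  obtain ⟨κ, a, ha, hsp, hli⟩ := exists_linearIndependent' ℝ f
  let b := Basis.mk hli (by rw [hsp, hspan])
  have : Fintype κ := Fintype.ofInjective a ha
  obtain ⟨k₀⟩ : Nonempty κ := b.index_nonempty
  refine ⟨b.coord k₀, fun h => by simpa using congr($h (b k₀)), ?_⟩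
  calc 2 * (finrank ℝ E - 1) = 2 * #(univ.erase k₀) := by
        rw [card_erase_of_mem (mem_univ _), card_univ, finrank_eq_card_basis b]
    _ ≤ 2 * #{i | b.coord k₀ (f i) = 0 ∧ 0 < b.sumCoords (f i)} := by
        gcongr
        refine card_le_card_of_injOn a (fun k hk => ?_) ha.injOn
        have hbk : b k = f (a k) := Basis.mk_apply hli _ k
        simp only [coe_filter, mem_univ, true_and, Set.mem_ofPred_eq]
        refine ⟨Basis.mk_coord_apply_ne (by simpa using hk), ?_⟩
        rw [← hbk, Basis.sumCoords_self_apply]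
        exact one_pos
    _ ≤ _ := two_mul_card_le_card_zero_of_halving _ _ fun c ε =>
        hhalf (c • b.coord k₀ + ε • b.sumCoords)

section InnerProduct

variable {E : Type*} [NormedAddCommGroup E] [InnerProductSpace ℝ E] [FiniteDimensional ℝ E]

lemma exists_ne_zero_inner_eq_dual {φ : Dual ℝ E} (hφ : φ ≠ 0) :
    ∃ w : E, w ≠ 0 ∧ ∀ x, ⟪w, x⟫ = φ x := by
  set w := (InnerProductSpace.toDual ℝ E).symm (LinearMap.toContinuousLinearMap φ)
  have hw : ∀ x, ⟪w, x⟫ = φ x := fun x => InnerProductSpace.toDual_symm_apply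
  refine ⟨w, fun h => hφ (LinearMap.ext fun x => ?_), hw⟩
  rw [← hw, h, inner_zero_left, LinearMap.zero_apply]

lemma two_mul_card_pos_le_of_halfspaceSymmetric {n : ℕ} {X : Fin n → E} {θ : E}
    (hθ : ∀ u : E, u ≠ 0 → (n : ℝ) / 2 ≤ (Nat.card {i : Fin n // ⟪u, X i⟫ ≤ ⟪u, θ⟫} : ℝ))
    (φ : Dual ℝ E) : 2 * #{i | 0 < φ (X i - θ)} ≤ n := by
  rcases eq_or_ne φ 0 with rfl | hφ
  · simp
  obtain ⟨w, hw0, hw⟩ := exists_ne_zero_inner_eq_dual hφ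
  have hclosed : Nat.card {i : Fin n // ⟪w, X i⟫ ≤ ⟪w, θ⟫} = #{i | ¬ 0 < φ (X i - θ)} := by
    rw [Nat.card_eq_fintype_card, Fintype.card_subtype]
    simp only [← hw, inner_sub_right, sub_pos, not_lt]
  have hsplit := card_filter_add_card_filter_not (s := univ) (fun i => 0 < φ (X i - θ))
  rw [card_univ, Fintype.card_fin] at hsplit
  have hθw := hθ w hw0
  rw [hclosed] at hθw
  have : n ≤ 2 * #{i | ¬ 0 < φ (X i - θ)} := by
    exact_mod_cast (show (n : ℝ) ≤ 2 * (#{i | ¬ 0 < φ (X i - θ)} : ℕ) by linarith)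
  omega

end InnerProduct

namespace InGeneralPosition

variable {p n : ℕ} {X : Fin n → EuclideanSpace ℝ (Fin p)}

lemma card_dual_sub_eq_zero_le (hgp : InGeneralPosition X) (θ : EuclideanSpace ℝ (Fin p))
    {φ : Dual ℝ (EuclideanSpace ℝ (Fin p))} (hφ : φ ≠ 0) : #{i | φ (X i - θ) = 0} ≤ p := by
  obtain ⟨w, hw0, hw⟩ := exists_ne_zero_inner_eq_dual hφ
  have := hgp w hw0 ⟪w, θ⟫
  rw [Nat.card_eq_fintype_card, Fintype.card_subtype] at this
  simpa only [← hw, inner_sub_right, sub_eq_zero] using this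

lemma span_range_sub_eq_top_s3 (hgp : InGeneralPosition X) (hn : p < n)
    (θ : EuclideanSpace ℝ (Fin p)) : Submodule.span ℝ (Set.range fun i => X i - θ) = ⊤ := by
  by_contra h
  obtain ⟨φ, hφ, hmap⟩ :=
    Submodule.exists_dual_map_eq_bot_of_lt_top (lt_top_iff_ne_top.2 h) inferInstance
  have hzero : ∀ i, φ (X i - θ) = 0 := fun i =>
    (Submodule.mem_bot ℝ).1 <| hmap ▸ Submodule.mem_map_of_mem (Submodule.subset_span ⟨i, rfl⟩)
  have := hgp.card_dual_sub_eq_zero_le θ hφ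
  simp only [hzero, filter_true, card_univ, Fintype.card_fin] at this
  omega

end InGeneralPosition

/-- For `p ≥ 3`, a data set in general position cannot be halfspace symmetric
about any point. -/
theorem not_halfspaceSymmetric_of_inGeneralPosition {p n : ℕ} (hp : 3 ≤ p) (hn : p < n)
    (X : Fin n → EuclideanSpace ℝ (Fin p))
    (hgp : InGeneralPosition X) :
    ¬ ∃ θ : EuclideanSpace ℝ (Fin p), ∀ u : EuclideanSpace ℝ (Fin p), u ≠ 0 →
      (n : ℝ) / 2 ≤ (Nat.card {i : Fin n // ⟪u, X i⟫ ≤ ⟪u, θ⟫} : ℝ) := by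
  rintro ⟨θ, hθ⟩
  have : Nontrivial (EuclideanSpace ℝ (Fin p)) :=
    Module.nontrivial_of_finrank_pos (by rw [finrank_euclideanSpace_fin]; omega)
  obtain ⟨φ, hφ, hmany⟩ := exists_dual_ne_zero_two_mul_finrank_sub_one_le_card _
    (hgp.span_range_sub_eq_top_s3 hn θ) fun φ => by
      rw [Fintype.card_fin]
      exact two_mul_card_pos_le_of_halfspaceSymmetric hθ φ
  have hfew := hgp.card_dual_sub_eq_zero_le θ hφ
  rw [finrank_euclideanSpace_fin] at hmany
  omega
end

section
/- Suppose the data set X^n in ℝ^p (with n > p ≥ 1) is in general position. If there exists an index l ∈ {1,…,n} such that the sample point X_l attains the maximum Tukey depth, i.e. D(X_l) = λ*, then X_l is an extreme point (a vertex) of the Tukey median region M. -/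
open scoped RealInnerProductSpace

/-!
Let `v` be a direction realising the depth of the sample point `X l`. Every `y ≠ X l` with
`⟪v, y⟫ ≤ ⟪v, X l⟫` is strictly shallower than `X l`: tilting `v` slightly towards `X l - y`
does not enlarge the halfspace at `X l`, while the tilted halfspace at `y` misses `X l` itself.
So the halfspace `{⟪v, ·⟫ ≤ ⟪v, X l⟫}` meets the median region only in `X l`, which is
therefore an exposed, hence extreme, point of it.
-/

open Filter Topology

section

variable {p n : ℕ} (X : Fin n → EuclideanSpace ℝ (Fin p))

noncomputable def minDepthCount (x : EuclideanSpace ℝ (Fin p)) : ℕ :=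
  sInf {k : ℕ | ∃ u : EuclideanSpace ℝ (Fin p), u ≠ 0 ∧ k = depthCount X u x}

theorem tukeyDepth_eq_minDepthCount_div (x : EuclideanSpace ℝ (Fin p)) :
    tukeyDepth X x = minDepthCount X x / n :=
  rfl

theorem minDepthCount_le_depthCount {u : EuclideanSpace ℝ (Fin p)} (hu : u ≠ 0)
    (x : EuclideanSpace ℝ (Fin p)) : minDepthCount X x ≤ depthCount X u x :=
  Nat.sInf_le ⟨u, hu, rfl⟩

theorem exists_depthCount_eq_minDepthCount [Nontrivial (EuclideanSpace ℝ (Fin p))]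
    (x : EuclideanSpace ℝ (Fin p)) : ∃ u ≠ 0, depthCount X u x = minDepthCount X x := by
  obtain ⟨u, hu⟩ := exists_ne (0 : EuclideanSpace ℝ (Fin p))
  obtain ⟨v, hv, hvx⟩ := Nat.sInf_mem (s := {k : ℕ | ∃ u, u ≠ 0 ∧ k = depthCount X u x})
    ⟨_, u, hu, rfl⟩
  exact ⟨v, hv, hvx.symm⟩

theorem depthCount_le_depthCount {u v x y : EuclideanSpace ℝ (Fin p)}
    (h : ∀ i, ⟪u, X i⟫ ≤ ⟪u, x⟫ → ⟪v, X i⟫ ≤ ⟪v, y⟫) :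
    depthCount X u x ≤ depthCount X v y :=
  Set.ncard_le_ncard h

theorem depthCount_lt_depthCount_sample {u y : EuclideanSpace ℝ (Fin p)} {l : Fin n}
    (h : ⟪u, y⟫ < ⟪u, X l⟫) : depthCount X u y < depthCount X u (X l) :=
  Set.ncard_lt_ncard <| LE.le.ssubset_of_mem_notMem (s := {i | ⟪u, X i⟫ ≤ ⟪u, y⟫})
    (t := {i | ⟪u, X i⟫ ≤ ⟪u, X l⟫}) (fun _ hi => hi.trans h.le) (le_refl ⟪u, X l⟫) h.not_ge

/-- Data points strictly above the hyperplane through `x` stay strictly above it when its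
normal is tilted slightly. -/
theorem exists_depthCount_add_smul_le (v w x : EuclideanSpace ℝ (Fin p)) :
    ∃ ε : ℝ, 0 < ε ∧ depthCount X (v + ε • w) x ≤ depthCount X v x := by
  have hstay : ∀ᶠ ε in 𝓝 (0 : ℝ), ∀ i, ⟪v, x⟫ < ⟪v, X i⟫ → ⟪v + ε • w, x⟫ < ⟪v + ε • w, X i⟫ := by
    refine eventually_all.2 fun i => ?_
    by_cases hi : ⟪v, x⟫ < ⟪v, X i⟫
    · have hcont : Continuous fun ε : ℝ => ⟪v + ε • w, X i⟫ - ⟪v + ε • w, x⟫ := by fun_prop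
      filter_upwards [continuousAt_const.eventually_lt hcont.continuousAt
        (by simpa using hi : (0 : ℝ) < ⟪v + (0 : ℝ) • w, X i⟫ - ⟪v + (0 : ℝ) • w, x⟫)]
        with ε hε _ using sub_pos.1 hε
    · exact Eventually.of_forall fun _ h => absurd h hi
  obtain ⟨ε, hεstay, hε⟩ :=
    ((hstay.filter_mono nhdsWithin_le_nhds).and (self_mem_nhdsWithin (s := Set.Ioi 0))).exists
  refine ⟨ε, hε, depthCount_le_depthCount X fun i hi => not_lt.1 fun hlt => ?_⟩
  exact (hεstay i hlt).not_ge hi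

theorem tukeyDepth_le_tukeyDepth_iff (hn : 0 < n) {x y : EuclideanSpace ℝ (Fin p)} :
    tukeyDepth X x ≤ tukeyDepth X y ↔ minDepthCount X x ≤ minDepthCount X y := by
  rw [tukeyDepth_eq_minDepthCount_div, tukeyDepth_eq_minDepthCount_div,
    div_le_div_iff_of_pos_right (by exact_mod_cast hn), Nat.cast_le]

theorem minDepthCount_lt_of_inner_le {v y : EuclideanSpace ℝ (Fin p)} {l : Fin n}
    (hv : depthCount X v (X l) ≤ minDepthCount X (X l)) (hy : y ≠ X l)
    (hvy : ⟪v, y⟫ ≤ ⟪v, X l⟫) : minDepthCount X y < minDepthCount X (X l) := by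
  obtain ⟨ε, hε, htilt⟩ := exists_depthCount_add_smul_le X v (X l - y) (X l)
  set u := v + ε • (X l - y)
  have hsep : ⟪u, y⟫ < ⟪u, X l⟫ := by
    have hw : 0 < ⟪X l - y, X l - y⟫ := real_inner_self_pos.2 (sub_ne_zero.2 hy.symm)
    have hgap : ⟪u, X l⟫ - ⟪u, y⟫ = (⟪v, X l⟫ - ⟪v, y⟫) + ε * ⟪X l - y, X l - y⟫ := by
      simp only [u, inner_add_left, real_inner_smul_left, inner_sub_left, inner_sub_right]
      ring
    linarith [mul_pos hε hw]
  have hu : u ≠ 0 := by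
    rintro h
    simp [h] at hsep
  calc minDepthCount X y ≤ depthCount X u y := minDepthCount_le_depthCount X hu y
    _ < depthCount X u (X l) := depthCount_lt_depthCount_sample X hsep
    _ ≤ minDepthCount X (X l) := htilt.trans hv

theorem inner_lt_inner_of_tukeyDepth_le {v y : EuclideanSpace ℝ (Fin p)} {l : Fin n}
    (hv : depthCount X v (X l) ≤ minDepthCount X (X l)) (hy : y ≠ X l)
    (hdepth : tukeyDepth X (X l) ≤ tukeyDepth X y) : ⟪v, X l⟫ < ⟪v, y⟫ := by
  rw [tukeyDepth_le_tukeyDepth_iff X l.pos] at hdepth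
  by_contra! hvy
  exact (minDepthCount_lt_of_inner_le X hv hy hvy).not_ge hdepth

end

theorem deepest_sample_point_is_extreme_general {p n : ℕ}
    (X : Fin n → EuclideanSpace ℝ (Fin p))
    (l : Fin n) (hl : tukeyDepth X (X l) = maxDepth X) :
    X l ∈ Set.extremePoints ℝ (medianRegion X) := by
  rcases subsingleton_or_nontrivial (EuclideanSpace ℝ (Fin p)) with _ | _
  · exact ⟨hl, fun _ _ _ _ _ => Subsingleton.elim _ _⟩
  obtain ⟨v, -, hv⟩ := exists_depthCount_eq_minDepthCount X (X l)
  refine exposedPoints_subset_extremePoints ⟨hl, -innerSL ℝ v, fun y hy => ?_⟩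
  simp only [neg_apply, innerSL_apply_apply, neg_le_neg_iff]
  rcases eq_or_ne y (X l) with rfl | hne
  · exact ⟨le_rfl, fun _ => rfl⟩
  have hexposed := inner_lt_inner_of_tukeyDepth_le X hv.le hne (hl.trans hy.symm).le
  exact ⟨hexposed.le, fun h => absurd h hexposed.not_ge⟩

/-- If a sample point attains the maximum Tukey depth, it must be an extreme point
(vertex) of the Tukey median region. -/
theorem deepest_sample_point_is_extreme {p n : ℕ} (hp : 1 ≤ p) (hn : p < n)
    (X : Fin n → EuclideanSpace ℝ (Fin p))
    (hgp : InGeneralPosition X)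
    (l : Fin n) (hl : tukeyDepth X (X l) = maxDepth X) :
    X l ∈ Set.extremePoints ℝ (medianRegion X) :=
  deepest_sample_point_is_extreme_general X l hl
end

section
/- Let z ∈ ℝ^p and let u ∈ ℝ^p be nonzero. Let J = {i ∈ {1,…,n} : ⟨u, X_i⟩ = ⟨u, z⟩} be the set of sample points lying on the hyperplane through z with normal u, and suppose that z does not belong to the affine hull of {X_i : i ∈ J}. Then the hyperplane can be tilted around z so as to place all points X_i, i ∈ J, strictly on one side, and consequently D(z) ≤ (1/n) · min( #{i : ⟨u, X_i⟩ < ⟨u, z⟩}, #{i : ⟨u, X_i⟩ > ⟨u, z⟩} ). -/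
open scoped RealInnerProductSpace

/-! The orthogonal projection `π z` of `z` onto the affine hull of the sample points on the
hyperplane gives a direction `v = π z - z` with `⟪v, X i - z⟫ = ‖v‖² > 0` for all of them. Tilting
`±u` to `±u + ε • v` with `ε > 0` small keeps the points strictly on the far side out of the
closed halfspace at `z`, and pushes the points on the hyperplane out of it too. -/

open Filter Topology

section Tilting

variable {E : Type*} [NormedAddCommGroup E] [InnerProductSpace ℝ E]

theorem AffineSubspace.exists_ne_zero_inner_lt_of_notMem [Nontrivial E]
    (A : AffineSubspace ℝ E) [A.direction.HasOrthogonalProjection] {z : E} (hz : z ∉ A) :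
    ∃ v : E, v ≠ 0 ∧ ∀ x ∈ A, ⟪v, z⟫ < ⟪v, x⟫ := by
  rcases A.eq_bot_or_nonempty with rfl | hA
  · obtain ⟨v, hv⟩ := exists_ne (0 : E)
    exact ⟨v, hv, fun x hx => absurd hx (AffineSubspace.notMem_bot ℝ E x)⟩
  have : Nonempty A := hA.to_subtype
  set q : E := (EuclideanGeometry.orthogonalProjection A z : E)
  have hqA : q ∈ A := EuclideanGeometry.orthogonalProjection_mem z
  have hqz : q - z ≠ 0 := sub_ne_zero.mpr fun h => hz (h ▸ hqA)
  refine ⟨q - z, hqz, fun x hx => ?_⟩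
  have horth : ⟪q - z, x - q⟫ = 0 :=
    Submodule.inner_left_of_mem_orthogonal (AffineSubspace.vsub_mem_direction hx hqA)
      (EuclideanGeometry.orthogonalProjection_vsub_mem_direction_orthogonal A z)
  have hpos : 0 < ⟪q - z, x - z⟫ := by
    rw [← sub_add_sub_cancel x q z, inner_add_right, horth, zero_add, real_inner_self_eq_norm_sq]
    positivity
  rwa [inner_sub_right, sub_pos] at hpos

theorem eventually_nhdsGT_neg_of_add_mul_nonpos {a b : ℝ} (h : a = 0 → 0 < b) :
    ∀ᶠ ε in 𝓝[>] 0, a + ε * b ≤ 0 → a < 0 := by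
  rcases lt_trichotomy a 0 with ha | rfl | ha
  · exact Eventually.of_forall fun _ _ => ha
  · filter_upwards [self_mem_nhdsWithin] with ε (hε : 0 < ε) hle
    nlinarith [h rfl]
  · have hcont : Tendsto (fun ε : ℝ => a + ε * b) (𝓝 0) (𝓝 a) :=
      (by fun_prop : Continuous fun ε : ℝ => a + ε * b).tendsto' _ _ (by simp)
    filter_upwards [nhdsWithin_le_nhds (hcont.eventually (lt_mem_nhds ha))] with ε hε hle
    linarith

theorem eventually_tilt {ι : Type*} [Finite ι] {X : ι → E} {z u v : E} (hu : u ≠ 0)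
    (hv : ∀ i, ⟪u, X i⟫ = ⟪u, z⟫ → ⟪v, z⟫ < ⟪v, X i⟫) :
    ∀ᶠ ε in 𝓝[>] (0 : ℝ), u + ε • v ≠ 0 ∧
      ∀ i, ⟪u + ε • v, X i⟫ ≤ ⟪u + ε • v, z⟫ → ⟪u, X i⟫ < ⟪u, z⟫ := by
  refine Eventually.and ?_ (eventually_all.mpr fun i => ?_)
  · have hcont : Tendsto (fun ε : ℝ => u + ε • v) (𝓝 0) (𝓝 u) :=
      (by fun_prop : Continuous fun ε : ℝ => u + ε • v).tendsto' _ _ (by simp)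
    exact nhdsWithin_le_nhds (hcont.eventually_ne hu)
  · have hi : ⟪u, X i - z⟫ = 0 → 0 < ⟪v, X i - z⟫ := by
      simpa only [inner_sub_right, sub_eq_zero, sub_pos] using hv i
    filter_upwards [eventually_nhdsGT_neg_of_add_mul_nonpos hi] with ε himp hle
    rw [← sub_neg, ← inner_sub_right]
    apply himp
    rwa [← real_inner_smul_left, ← inner_add_left, inner_sub_right, sub_nonpos]

end Tilting

section Depth

variable {p n : ℕ} {X : Fin n → EuclideanSpace ℝ (Fin p)} {x w : EuclideanSpace ℝ (Fin p)}

theorem depthCount_le_card_of_imp {P : Fin n → Prop} (h : ∀ i, ⟪w, X i⟫ ≤ ⟪w, x⟫ → P i) :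
    depthCount X w x ≤ Nat.card {i // P i} :=
  Nat.card_mono (Set.toFinite {i | P i}) h

theorem tukeyDepth_le_depthCount_div (hw : w ≠ 0) :
    tukeyDepth X x ≤ depthCount X w x / (n : ℝ) := by
  unfold tukeyDepth
  gcongr
  exact Nat.sInf_le ⟨w, hw, rfl⟩

theorem tukeyDepth_le_card_lt_div {z u v : EuclideanSpace ℝ (Fin p)} (hu : u ≠ 0)
    (hv : ∀ i, ⟪u, X i⟫ = ⟪u, z⟫ → ⟪v, z⟫ < ⟪v, X i⟫) :
    tukeyDepth X z ≤ Nat.card {i // ⟪u, X i⟫ < ⟪u, z⟫} / (n : ℝ) := by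
  obtain ⟨ε, hne, himp⟩ := (eventually_tilt hu hv).exists
  exact (tukeyDepth_le_depthCount_div hne).trans <| by
    gcongr
    exact depthCount_le_card_of_imp himp

end Depth

theorem depth_le_of_not_mem_affineSpan_general {p n : ℕ}
    (X : Fin n → EuclideanSpace ℝ (Fin p))
    (z u : EuclideanSpace ℝ (Fin p)) (hu : u ≠ 0)
    (hz : z ∉ affineSpan ℝ (X '' {i : Fin n | ⟪u, X i⟫ = ⟪u, z⟫})) :
    (∃ u' : EuclideanSpace ℝ (Fin p), u' ≠ 0 ∧
      ∀ i : Fin n, ⟪u, X i⟫ = ⟪u, z⟫ → ⟪u', z⟫ < ⟪u', X i⟫) ∧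
    tukeyDepth X z ≤
      (min (Nat.card {i : Fin n // ⟪u, X i⟫ < ⟪u, z⟫})
           (Nat.card {i : Fin n // ⟪u, z⟫ < ⟪u, X i⟫}) : ℕ) / (n : ℝ) := by
  have : Nontrivial (EuclideanSpace ℝ (Fin p)) := nontrivial_of_ne u 0 hu
  obtain ⟨v, hv0, hv⟩ := AffineSubspace.exists_ne_zero_inner_lt_of_notMem _ hz
  have hsep : ∀ i, ⟪u, X i⟫ = ⟪u, z⟫ → ⟪v, z⟫ < ⟪v, X i⟫ :=
    fun i hi => hv _ (subset_affineSpan ℝ _ ⟨i, hi, rfl⟩)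
  refine ⟨⟨v, hv0, hsep⟩, ?_⟩
  rcases min_choice (Nat.card {i : Fin n // ⟪u, X i⟫ < ⟪u, z⟫})
      (Nat.card {i : Fin n // ⟪u, z⟫ < ⟪u, X i⟫}) with h | h <;> rw [h]
  · exact tukeyDepth_le_card_lt_div hu hsep
  · simpa only [inner_neg_left, neg_lt_neg_iff] using
      tukeyDepth_le_card_lt_div (neg_ne_zero.mpr hu) (by simpa only [inner_neg_left, neg_inj])

/-- If `z` does not lie in the affine hull of the sample points on the hyperplane
through `z` with normal `u`, then the hyperplane can be tilted around `z` so as to place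
all those points strictly on one side, and consequently
`D(z) ≤ (1/n)·min(#{⟪u,Xᵢ⟫ < ⟪u,z⟫}, #{⟪u,Xᵢ⟫ > ⟪u,z⟫})`. -/
theorem depth_le_of_not_mem_affineSpan {p n : ℕ} (hp : 1 ≤ p) (hn : 1 ≤ n)
    (X : Fin n → EuclideanSpace ℝ (Fin p))
    (z u : EuclideanSpace ℝ (Fin p)) (hu : u ≠ 0)
    (hz : z ∉ affineSpan ℝ (X '' {i : Fin n | ⟪u, X i⟫ = ⟪u, z⟫})) :
    (∃ u' : EuclideanSpace ℝ (Fin p), u' ≠ 0 ∧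
      ∀ i : Fin n, ⟪u, X i⟫ = ⟪u, z⟫ → ⟪u', z⟫ < ⟪u', X i⟫) ∧
    tukeyDepth X z ≤
      (min (Nat.card {i : Fin n // ⟪u, X i⟫ < ⟪u, z⟫})
           (Nat.card {i : Fin n // ⟪u, z⟫ < ⟪u, X i⟫}) : ℕ) / (n : ℝ) :=
  depth_le_of_not_mem_affineSpan_general X z u hu hz
end
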